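/- Let π < θ ≤ φ < 2π, and let (λ_j)_{j∈ℕ} be a sequence of distinct nonzero complex numbers, each with argument in [θ, φ], whose counting function n(r) = #{j : |λ_j| ≤ r} is finite for every r and satisfies n(r) ≥ c·r for some c > 0 and all sufficiently large r. Then the series ∑_j (−Im λ_j)/|λ_j|² diverges (note that −Im λ_j > 0 for every j, since arg λ_j ∈ (π, 2π)). -/

import Mathlib

/-!
On a closed sector `θ ≤ arg λ ≤ φ` inside `π < arg λ < 2π` the function `-sin` is bounded below by
some `ε > 0`, so `-Im λ ≥ ε |λ|` and the Breit–Wigner series dominates `ε ∑ 1/|λ_j|`. If `∑ 1/|λ_j|`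
converged, pick a finite set of indices outside which every finite partial sum is below `δ`: the
points with `|λ_j| ≤ R` outside it each contribute at least `1/R`, so there are fewer than `δ R` of
them. Hence `n(R) = o(R)`, contradicting `n(R) ≥ c R`.
-/

open Filter Asymptotics Finset Complex

theorem exists_pos_forall_le_neg_sin {θ φ : ℝ} (hθ : Real.pi < θ) (hφ : φ < 2 * Real.pi) :
    ∃ ε > 0, ∀ α ∈ Set.Icc θ φ, ε ≤ -Real.sin α := by
  refine isCompact_Icc.exists_forall_le' Real.continuous_sin.neg.continuousOn fun α hα => ?_
  have h : Real.sin (α - 2 * Real.pi) < 0 :=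
    Real.sin_neg_of_neg_of_neg_pi_lt (by linarith [hα.2]) (by linarith [hα.1])
  rw [Real.sin_sub_two_pi] at h
  exact neg_pos.2 h

theorem mul_norm_le_neg_im_ofReal_mul_exp {r α ε : ℝ} (hr : 0 ≤ r) (hε : ε ≤ -Real.sin α) :
    ε * ‖(r : ℂ) * exp (α * I)‖ ≤ -((r : ℂ) * exp (α * I)).im := by
  rw [norm_mul, norm_exp_ofReal_mul_I, norm_real, Real.norm_of_nonneg hr, mul_one, mul_comm,
    im_ofReal_mul, exp_ofReal_mul_I_im, ← mul_neg]
  exact mul_le_mul_of_nonneg_left hε hr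

theorem summable_inv_norm_of_summable_neg_im_div_sq {ι : Type*} {z : ι → ℂ} {ε : ℝ} (hε : 0 < ε)
    (hz : ∀ i, ε * ‖z i‖ ≤ -(z i).im) (hs : Summable fun i => -(z i).im / ‖z i‖ ^ 2) :
    Summable fun i => ‖z i‖⁻¹ := by
  refine (summable_mul_left_iff hε.ne').1 (hs.of_nonneg_of_le (fun i => by positivity) fun i => ?_)
  calc ε * ‖z i‖⁻¹ = ε * ‖z i‖ / ‖z i‖ ^ 2 := by
        rcases eq_or_ne ‖z i‖ 0 with h | h
        · simp [h]
        · field_simp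
    _ ≤ -(z i).im / ‖z i‖ ^ 2 := div_le_div_of_nonneg_right (hz i) (by positivity)

section CountingFunction

variable {ι : Type*} {r : ι → ℝ}

theorem Summable.finite_setOf_le (hr : ∀ i, 0 < r i) (hs : Summable fun i => (r i)⁻¹) {R : ℝ}
    (hR : 0 < R) : {i | r i ≤ R}.Finite := by
  refine (eventually_cofinite.1 (hs.tendsto_cofinite_zero.eventually
    (gt_mem_nhds (inv_pos.2 hR)))).subset fun i hi => ?_
  exact not_lt.2 (inv_anti₀ (hr i) hi)

theorem Summable.card_setOf_le_isLittleO (hr : ∀ i, 0 < r i) (hs : Summable fun i => (r i)⁻¹) :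
    (fun R : ℝ => (Nat.card {i | r i ≤ R} : ℝ)) =o[atTop] id := by
  classical
  refine isLittleO_iff.2 fun δ hδ => ?_
  obtain ⟨s, hs_tail⟩ := hs.vanishing (Iio_mem_nhds (half_pos hδ))
  filter_upwards [eventually_gt_atTop 0, eventually_ge_atTop (2 * #s / δ)] with R hR hRs
  have hN := hs.finite_setOf_le hr hR
  set t := hN.toFinset \ s
  have ht_tail : ∑ i ∈ t, (r i)⁻¹ < δ / 2 := hs_tail t sdiff_disjoint
  have ht_card : (#t : ℝ) ≤ R * ∑ i ∈ t, (r i)⁻¹ := by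
    have h := card_nsmul_le_sum t (fun i => (r i)⁻¹) R⁻¹ fun i hi =>
      inv_anti₀ (hr i) (hN.mem_toFinset.1 (mem_sdiff.1 hi).1)
    rw [nsmul_eq_mul] at h
    calc (#t : ℝ) = R * (#t * R⁻¹) := by field_simp
      _ ≤ R * ∑ i ∈ t, (r i)⁻¹ := mul_le_mul_of_nonneg_left h hR.le
  have hs_card : (#s : ℝ) ≤ δ * R / 2 := by
    rw [div_le_iff₀ hδ] at hRs
    linarith
  calc ‖(Nat.card {i | r i ≤ R} : ℝ)‖ = #hN.toFinset := by
        rw [Real.norm_natCast, Nat.card_coe_set_eq, Set.ncard_eq_toFinset_card _ hN]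
    _ ≤ #t + #s := by exact_mod_cast card_le_card_sdiff_add_card
    _ ≤ R * (δ / 2) + δ * R / 2 := by gcongr; linarith [mul_lt_mul_of_pos_left ht_tail hR]
    _ = δ * ‖id R‖ := by rw [id, Real.norm_of_nonneg hR.le]; ring

end CountingFunction

theorem breit_wigner_divergence_in_sector_general
    (θ φ : ℝ) (hθ : Real.pi < θ) (hφ : φ < 2 * Real.pi)
    (lam : ℕ → ℂ) (hne : ∀ j, lam j ≠ 0)
    (harg : ∀ j, ∃ r α : ℝ, 0 < r ∧ θ ≤ α ∧ α ≤ φ ∧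
      lam j = (r : ℂ) * Complex.exp ((α : ℂ) * Complex.I))
    (c : ℝ) (hc : 0 < c)
    (hlin : ∀ᶠ r : ℝ in Filter.atTop, c * r ≤ (Nat.card {j : ℕ | ‖lam j‖ ≤ r} : ℝ)) :
    ¬ Summable (fun j : ℕ => (-(lam j).im) / ‖lam j‖ ^ 2) := by
  intro hsum
  obtain ⟨ε, hε, hsin⟩ := exists_pos_forall_le_neg_sin hθ hφ
  have hsector : ∀ j, ε * ‖lam j‖ ≤ -(lam j).im := fun j => by
    obtain ⟨r, α, hr, hθα, hαφ, hj⟩ := harg j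
    rw [hj]
    exact mul_norm_le_neg_im_ofReal_mul_exp hr.le (hsin α ⟨hθα, hαφ⟩)
  have hinv := summable_inv_norm_of_summable_neg_im_div_sq hε hsector hsum
  have hsmall := (hinv.card_setOf_le_isLittleO fun j => norm_pos_iff.2 (hne j)).def (half_pos hc)
  obtain ⟨R, hR, hlow, hup⟩ := ((eventually_gt_atTop 0).and (hlin.and hsmall)).exists
  rw [Real.norm_natCast, id, Real.norm_of_nonneg hR.le] at hup
  linarith [mul_pos hc hR]

/-- Divergence of the angular part of the Breit–Wigner series: a sequence of distinct
nonzero points confined to a closed sector strictly inside the open lower half-plane,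
whose counting function grows at least linearly, has divergent series `∑ (−Im λ_j)/|λ_j|²`. -/
theorem breit_wigner_divergence_in_sector
    (θ φ : ℝ) (hθ : Real.pi < θ) (hθφ : θ ≤ φ) (hφ : φ < 2 * Real.pi)
    (lam : ℕ → ℂ) (hinj : Function.Injective lam) (hne : ∀ j, lam j ≠ 0)
    (harg : ∀ j, ∃ r α : ℝ, 0 < r ∧ θ ≤ α ∧ α ≤ φ ∧
      lam j = (r : ℂ) * Complex.exp ((α : ℂ) * Complex.I))
    (hfin : ∀ r : ℝ, {j : ℕ | ‖lam j‖ ≤ r}.Finite)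
    (c : ℝ) (hc : 0 < c)
    (hlin : ∀ᶠ r : ℝ in Filter.atTop, c * r ≤ (Nat.card {j : ℕ | ‖lam j‖ ≤ r} : ℝ)) :
    ¬ Summable (fun j : ℕ => (-(lam j).im) / ‖lam j‖ ^ 2) :=
  breit_wigner_divergence_in_sector_general θ φ hθ hφ lam hne harg c hc hlin
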